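/- arXiv:1808.02126 — 3 statements merged into one kernel-verified Lean document; each statement's English description precedes it below -/
import Mathlib

section
/- Suppose (A_m)_{m∈ℕ} admits a polynomial dichotomy with respect to a sequence of norms ‖·‖_m, with projections P_m, constants D, λ > 0. Let Z = Im Q_1 where Q_1 = Id − P_1. Then the operator T_Z : (D(T_Z), ‖·‖_{T_Z}) → Y_0 is bijective, where ‖x‖_{T_Z} = ‖x‖_∞ + ‖T_Z x‖_∞. -/
open scoped BigOperators

variable {X : Type*} [NormedAddCommGroup X] [NormedSpace ℝ X]

/-- The cocycle generated by a sequence of bounded operators: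
`coc A n m = 𝓐(m,n) = A_{m-1} ⋯ A_n` for `m > n`, and `= Id` for `m ≤ n`. -/
def coc (A : ℕ → X →L[ℝ] X) (n : ℕ) : ℕ → X →L[ℝ] X
  | 0 => 1
  | m + 1 => if n ≤ m then (A m).comp (coc A n m) else 1

/-- The formal difference operator: `(T x)_1 = 0` and
`(T x)_{m+1} = (m+1)(x_{m+1} - A_m x_m)` for `m ≥ 1`. -/
noncomputable def TOp (A : ℕ → X →L[ℝ] X) (x : ℕ → X) : ℕ → X :=
  fun m => if m ≤ 1 then 0 else (m : ℝ) • (x m - A (m - 1) (x (m - 1)))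

/-- `N` is a family (indexed by `m ≥ 1`) of norms on `X`, each equivalent to `‖·‖`. -/
def NormFamily (N : ℕ → X → ℝ) : Prop :=
  ∀ m, 1 ≤ m →
    (∀ x y : X, N m (x + y) ≤ N m x + N m y) ∧
    (∀ (c : ℝ) (x : X), N m (c • x) = |c| * N m x) ∧
    (∃ c C : ℝ, 0 < c ∧ ∀ x : X, c * ‖x‖ ≤ N m x ∧ N m x ≤ C * ‖x‖)

/-- Membership in `Y`: `sup_{m ≥ 1} ‖x_m‖_m < ∞`. -/
def MemY (N : ℕ → X → ℝ) (x : ℕ → X) : Prop :=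
  ∃ S : ℝ, ∀ m, 1 ≤ m → N m (x m) ≤ S

/-- Membership in `Y₀ = Y_{{0}}`: bounded and `x_1 = 0`. -/
def MemY0 (N : ℕ → X → ℝ) (x : ℕ → X) : Prop := x 1 = 0 ∧ MemY N x

/-- Membership in `Y_Z`: bounded and `x_1 ∈ Z`. -/
def MemYZ (N : ℕ → X → ℝ) (Z : Set X) (x : ℕ → X) : Prop := x 1 ∈ Z ∧ MemY N x

/-- Membership in the domain `𝒟(T_Z)`: `x ∈ Y_Z` and
`sup_{m ≥ 1} (m+1)‖x_{m+1} - A_m x_m‖_{m+1} < ∞`. -/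
def MemD (A : ℕ → X →L[ℝ] X) (N : ℕ → X → ℝ) (Z : Set X) (x : ℕ → X) : Prop :=
  MemYZ N Z x ∧ MemY N (TOp A x)

/-- Polynomial dichotomy (with given projections and constants) with respect to the
sequence of norms `N`.  The bound along the unstable direction is stated in the
equivalent "forward" form: `‖u‖_m ≤ D (m/n)^λ ‖𝓐(n,m)u‖_n` for `u ∈ Ker P_m`, `m ≤ n`. -/
def PolyDichWith (A : ℕ → X →L[ℝ] X) (N : ℕ → X → ℝ) (P : ℕ → X →L[ℝ] X)
    (D lam : ℝ) : Prop :=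
  (∀ m, 1 ≤ m → (P m).comp (P m) = P m) ∧
  (∀ m, 1 ≤ m → (A m).comp (P m) = (P (m + 1)).comp (A m)) ∧
  (∀ m, 1 ≤ m → ∀ y, P (m + 1) y = 0 → ∃! x, P m x = 0 ∧ A m x = y) ∧
  (∀ m n, 1 ≤ n → n ≤ m → ∀ x : X,
      N m (coc A n m (P n x)) ≤ D * (((m : ℝ) / (n : ℝ)) ^ (-lam)) * N n x) ∧
  (∀ m n, 1 ≤ m → m ≤ n → ∀ u : X, P m u = 0 →
      N m u ≤ D * (((m : ℝ) / (n : ℝ)) ^ lam) * N n (coc A m n u))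

/-- `(A_m)` admits a polynomial dichotomy with respect to the sequence of norms `N`. -/
def PolyDich (A : ℕ → X →L[ℝ] X) (N : ℕ → X → ℝ) : Prop :=
  ∃ (P : ℕ → X →L[ℝ] X) (D lam : ℝ), 0 < D ∧ 0 < lam ∧ PolyDichWith A N P D lam

/-! The bounded solution of `x_{m+1} = A_m x_m + (m+1)⁻¹ y_{m+1}` is given by the discrete
Green's function: push the stable part of each `y_k` forward and pull the unstable part back,
`x_m = ∑_{k ≤ m} k⁻¹ 𝓐(m,k) P_k y_k - ∑_{k > m} k⁻¹ 𝓐(m,k) Q_k y_k`. The dichotomy estimates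
reduce `sup_m ‖x_m‖_m < ∞` to `∑_{k ≤ m} k⁻¹ (k/m)^λ ≤ 1 + λ⁻¹` and `∑_{k > m} k⁻¹ (m/k)^λ ≤ λ⁻¹`,
and `x_1 = -∑_{k ≥ 2} k⁻¹ 𝓐(1,k) Q_k y_k` lies in `Ker P₁ = Im Q₁`.
For uniqueness, the difference of two solutions is `𝓐(m,1) z` with `z ∈ Ker P₁`, and the
unstable estimate `‖z‖₁ ≤ D m^{-λ} ‖𝓐(m,1) z‖_m` forces a bounded such orbit to vanish. -/

section RealEstimates

open Finset

lemma exists_rpow_add_one_sub_rpow {a p : ℝ} (ha : 0 ≤ a) (hap : 0 < a ∨ 0 ≤ p) :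
    ∃ c ∈ Set.Ioo a (a + 1), (a + 1) ^ p - a ^ p = p * c ^ (p - 1) := by
  obtain ⟨c, hc, hslope⟩ := exists_hasDerivAt_eq_slope (fun x : ℝ => x ^ p)
    (fun x => p * x ^ (p - 1)) (lt_add_one a)
    (continuousOn_id.rpow_const fun x hx => hap.imp (fun h => (h.trans_le hx.1).ne') id)
    (fun x hx => Real.hasDerivAt_rpow_const (Or.inl (ha.trans_lt hx.1).ne'))
  exact ⟨c, hc, by rw [hslope, add_sub_cancel_left, div_one]⟩

lemma mul_rpow_sub_one_le_rpow_sub {lam a : ℝ} (hlam : 0 < lam) (hlam1 : lam ≤ 1) (ha : 0 ≤ a) :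
    lam * (a + 1) ^ (lam - 1) ≤ (a + 1) ^ lam - a ^ lam := by
  obtain ⟨c, hc, heq⟩ := exists_rpow_add_one_sub_rpow ha (Or.inr hlam.le)
  rw [heq]
  exact mul_le_mul_of_nonneg_left
    (Real.rpow_le_rpow_of_nonpos (ha.trans_lt hc.1) hc.2.le (by linarith)) hlam.le

lemma mul_rpow_neg_sub_one_le_rpow_neg_sub {lam a : ℝ} (hlam : 0 < lam) (ha : 0 < a) :
    lam * (a + 1) ^ (-lam - 1) ≤ a ^ (-lam) - (a + 1) ^ (-lam) := by
  obtain ⟨c, hc, heq⟩ := exists_rpow_add_one_sub_rpow (p := -lam) ha.le (Or.inl ha)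
  have hc_le : (a + 1) ^ (-lam - 1) ≤ c ^ (-lam - 1) :=
    Real.rpow_le_rpow_of_nonpos (ha.trans hc.1) hc.2.le (by linarith)
  nlinarith

lemma inv_mul_div_rpow {k m : ℝ} (hk : 0 < k) (hm : 0 ≤ m) (p : ℝ) :
    k⁻¹ * (m / k) ^ p = m ^ p * k ^ (-p - 1) := by
  rw [Real.div_rpow hm hk.le, Real.rpow_sub hk, Real.rpow_neg hk.le, Real.rpow_one]
  field_simp

lemma sum_Icc_rpow_sub_one_le {lam : ℝ} (hlam : 0 < lam) (hlam1 : lam ≤ 1) (m : ℕ) :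
    lam * ∑ k ∈ Icc 1 m, (k : ℝ) ^ (lam - 1) ≤ (m : ℝ) ^ lam := by
  induction m with
  | zero => simp [Real.zero_rpow hlam.ne']
  | succ m ih =>
    rw [sum_Icc_succ_top (by omega), mul_add, Nat.cast_succ]
    linarith [mul_rpow_sub_one_le_rpow_sub hlam hlam1 (Nat.cast_nonneg m)]

lemma sum_range_rpow_neg_sub_one_le {lam : ℝ} (hlam : 0 < lam) {m : ℕ} (hm : 1 ≤ m) (n : ℕ) :
    lam * ∑ j ∈ range n, ((j + (m + 1) : ℕ) : ℝ) ^ (-lam - 1)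
      ≤ (m : ℝ) ^ (-lam) - ((n + m : ℕ) : ℝ) ^ (-lam) := by
  induction n with
  | zero => simp
  | succ n ih =>
    have key := mul_rpow_neg_sub_one_le_rpow_neg_sub hlam
      (show (0 : ℝ) < (n + m : ℕ) by positivity)
    rw [sum_range_succ, mul_add]
    push_cast at ih key ⊢
    rw [show (n : ℝ) + 1 + m = n + m + 1 by ring]
    rw [show (n : ℝ) + (m + 1) = n + m + 1 by ring] at *
    linarith

lemma sum_Icc_inv_mul_div_rpow_neg_le {lam : ℝ} (hlam : 0 < lam) (m : ℕ) :
    ∑ k ∈ Icc 1 m, (k : ℝ)⁻¹ * ((m : ℝ) / k) ^ (-lam) ≤ 1 + lam⁻¹ := by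
  rcases Nat.eq_zero_or_pos m with rfl | hm
  · simp only [Icc_eq_empty_of_lt one_pos, sum_empty]
    positivity
  have hm0 : (0 : ℝ) < m := by exact_mod_cast hm
  rcases le_or_gt lam 1 with hlam1 | hlam1
  · calc ∑ k ∈ Icc 1 m, (k : ℝ)⁻¹ * ((m : ℝ) / k) ^ (-lam)
          = (m : ℝ) ^ (-lam) * ∑ k ∈ Icc 1 m, (k : ℝ) ^ (lam - 1) := by
            rw [mul_sum]
            refine sum_congr rfl fun k hk => ?_
            rw [inv_mul_div_rpow (by exact_mod_cast (mem_Icc.1 hk).1) hm0.le, neg_neg]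
        _ ≤ (m : ℝ) ^ (-lam) * ((m : ℝ) ^ lam / lam) := by
            gcongr
            rw [le_div_iff₀ hlam, mul_comm]
            exact sum_Icc_rpow_sub_one_le hlam hlam1 m
        _ = lam⁻¹ := by rw [mul_div_assoc', ← Real.rpow_add hm0]; simp
        _ ≤ 1 + lam⁻¹ := by linarith
  · calc ∑ k ∈ Icc 1 m, (k : ℝ)⁻¹ * ((m : ℝ) / k) ^ (-lam)
          ≤ ∑ k ∈ Icc 1 m, (m : ℝ)⁻¹ := sum_le_sum fun k hk => by
            have hk0 : (0 : ℝ) < k := by exact_mod_cast (mem_Icc.1 hk).1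
            have hkm : (k : ℝ) ≤ m := by exact_mod_cast (mem_Icc.1 hk).2
            calc (k : ℝ)⁻¹ * ((m : ℝ) / k) ^ (-lam) ≤ (k : ℝ)⁻¹ * ((m : ℝ) / k) ^ (-1 : ℝ) := by
                  refine mul_le_mul_of_nonneg_left ?_ (inv_nonneg.2 hk0.le)
                  exact Real.rpow_le_rpow_of_exponent_le ((one_le_div hk0).2 hkm) (by linarith)
              _ = (m : ℝ)⁻¹ := by rw [Real.rpow_neg_one]; field_simp
        _ = 1 := by simp [hm0.ne']
        _ ≤ 1 + lam⁻¹ := by linarith [inv_pos.2 hlam]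

lemma sum_range_inv_mul_div_rpow_le {lam : ℝ} (hlam : 0 < lam) {m : ℕ} (hm : 1 ≤ m) (n : ℕ) :
    ∑ j ∈ range n, ((j + (m + 1) : ℕ) : ℝ)⁻¹ * ((m : ℝ) / (j + (m + 1) : ℕ)) ^ lam ≤ lam⁻¹ := by
  have hm0 : (0 : ℝ) < m := by exact_mod_cast hm
  calc ∑ j ∈ range n, ((j + (m + 1) : ℕ) : ℝ)⁻¹ * ((m : ℝ) / (j + (m + 1) : ℕ)) ^ lam
      = (m : ℝ) ^ lam * ∑ j ∈ range n, ((j + (m + 1) : ℕ) : ℝ) ^ (-lam - 1) := by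
        rw [mul_sum]
        exact sum_congr rfl fun j _ => inv_mul_div_rpow (by positivity) hm0.le lam
    _ ≤ (m : ℝ) ^ lam * ((m : ℝ) ^ (-lam) / lam) := by
        gcongr
        rw [le_div_iff₀ hlam, mul_comm]
        have : 0 ≤ ((n + m : ℕ) : ℝ) ^ (-lam) := by positivity
        linarith [sum_range_rpow_neg_sub_one_le hlam hm n]
    _ = lam⁻¹ := by rw [mul_div_assoc', ← Real.rpow_add hm0]; simp

end RealEstimates

lemma coc_succ (A : ℕ → X →L[ℝ] X) {n m : ℕ} (h : n ≤ m) :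
    coc A n (m + 1) = (A m).comp (coc A n m) := by
  simp [coc, h]

lemma coc_self (A : ℕ → X →L[ℝ] X) (n : ℕ) : coc A n n = 1 := by
  cases n <;> simp [coc]

lemma coc_coc_apply (A : ℕ → X →L[ℝ] X) {n m k : ℕ} (hnm : n ≤ m) (hmk : m ≤ k) (v : X) :
    coc A m k (coc A n m v) = coc A n k v := by
  induction k, hmk using Nat.le_induction with
  | base => simp [coc_self]
  | succ k hk ih => simp [coc_succ A (hnm.trans hk), coc_succ A hk, ih]

lemma TOp_one (A : ℕ → X →L[ℝ] X) (x : ℕ → X) : TOp A x 1 = 0 := by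
  simp [TOp]

lemma TOp_succ (A : ℕ → X →L[ℝ] X) (x : ℕ → X) {m : ℕ} (hm : 1 ≤ m) :
    TOp A x (m + 1) = ((m + 1 : ℕ) : ℝ) • (x (m + 1) - A m (x m)) := by
  simp [TOp, show ¬ m + 1 ≤ 1 by omega]

lemma sub_eq_coc_of_TOp_eq {A : ℕ → X →L[ℝ] X} {x x' : ℕ → X}
    (hT : ∀ m, 1 ≤ m → TOp A x m = TOp A x' m) :
    ∀ m, 1 ≤ m → x m - x' m = coc A 1 m (x 1 - x' 1) := by
  intro m hm
  induction m, hm using Nat.le_induction with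
  | base => simp [coc_self]
  | succ m hm ih =>
    have h := hT (m + 1) (by omega)
    rw [TOp_succ A x hm, TOp_succ A x' hm] at h
    have h' := smul_right_injective X (by positivity : ((m + 1 : ℕ) : ℝ) ≠ 0) h
    rw [coc_succ A hm, ContinuousLinearMap.comp_apply, ← ih, map_sub]
    exact sub_eq_sub_iff_sub_eq_sub.1 h'

namespace NormFamily

variable {N : ℕ → X → ℝ} {m : ℕ}

def seminorm (hN : NormFamily N) (hm : 1 ≤ m) : Seminorm ℝ X :=
  Seminorm.of (N m) (hN m hm).1 fun c x => by rw [Real.norm_eq_abs]; exact (hN m hm).2.1 c x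

lemma nonneg (hN : NormFamily N) (hm : 1 ≤ m) (x : X) : 0 ≤ N m x :=
  apply_nonneg (hN.seminorm hm) x

lemma smul (hN : NormFamily N) (hm : 1 ≤ m) (c : ℝ) (x : X) : N m (c • x) = |c| * N m x :=
  (hN m hm).2.1 c x

lemma sub_le (hN : NormFamily N) (hm : 1 ≤ m) (x y : X) : N m (x - y) ≤ N m x + N m y :=
  map_sub_le_add (hN.seminorm hm) x y

lemma sum_le (hN : NormFamily N) (hm : 1 ≤ m) {ι : Type*} (s : Finset ι) (f : ι → X) :
    N m (∑ i ∈ s, f i) ≤ ∑ i ∈ s, N m (f i) :=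
  Finset.le_sum_of_subadditive (N m) (map_zero (hN.seminorm hm)).le (hN m hm).1 s f

lemma continuous (hN : NormFamily N) (hm : 1 ≤ m) : Continuous (N m) := by
  obtain ⟨_, C, _, hC⟩ := (hN m hm).2.2
  refine (LipschitzWith.of_dist_le' (K := C) fun x y => ?_).continuous
  rw [Real.dist_eq, dist_eq_norm]
  exact (abs_sub_map_le_sub (hN.seminorm hm) x y).trans (hC (x - y)).2

lemma tsum_le (hN : NormFamily N) (hm : 1 ≤ m) {t : ℕ → X} (ht : Summable t) {B : ℝ}
    (hB : ∀ n, ∑ j ∈ Finset.range n, N m (t j) ≤ B) : N m (∑' j, t j) ≤ B :=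
  le_of_tendsto (((hN.continuous hm).tendsto _).comp ht.hasSum.tendsto_sum_nat)
    (Filter.Eventually.of_forall fun n => (hN.sum_le hm _ _).trans (hB n))

lemma eq_zero_of_le_zero (hN : NormFamily N) (hm : 1 ≤ m) {x : X} (hx : N m x ≤ 0) : x = 0 := by
  obtain ⟨c, _, hc, hcC⟩ := (hN m hm).2.2
  exact norm_le_zero_iff.1 <| nonpos_of_mul_nonpos_right ((hcC x).1.trans hx) hc

end NormFamily

namespace PolyDichWith

open Filter Topology

variable {A : ℕ → X →L[ℝ] X} {N : ℕ → X → ℝ} {P : ℕ → X →L[ℝ] X} {D lam : ℝ}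

lemma proj_sub_proj (hdich : PolyDichWith A N P D lam) {m : ℕ} (hm : 1 ≤ m) (v : X) :
    P m (v - P m v) = 0 := by
  have h := congrArg (fun L : X →L[ℝ] X => L v) (hdich.1 m hm)
  simp only [ContinuousLinearMap.comp_apply] at h
  rw [map_sub, h, sub_self]

lemma proj_coc_eq_zero (hdich : PolyDichWith A N P D lam) {n m : ℕ} (hn : 1 ≤ n) (hnm : n ≤ m)
    {u : X} (hu : P n u = 0) : P m (coc A n m u) = 0 := by
  induction m, hnm using Nat.le_induction with
  | base => simpa [coc_self] using hu
  | succ m hm ih =>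
    have h := congrArg (fun L : X →L[ℝ] X => L (coc A n m u)) (hdich.2.1 m (hn.trans hm))
    simp only [ContinuousLinearMap.comp_apply] at h
    rw [coc_succ A hm, ContinuousLinearMap.comp_apply, ← h, ih, map_zero]

lemma exists_coc_eq (hdich : PolyDichWith A N P D lam) {n k : ℕ} (hn : 1 ≤ n) (hnk : n ≤ k)
    {v : X} (hv : P k v = 0) : ∃ u, P n u = 0 ∧ coc A n k u = v := by
  induction k, hnk using Nat.le_induction generalizing v with
  | base => exact ⟨v, hv, by simp [coc_self]⟩
  | succ k hk ih =>
    obtain ⟨w, ⟨hw, rfl⟩, -⟩ := hdich.2.2.1 k (hn.trans hk) v hv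
    obtain ⟨u, hu, rfl⟩ := ih hw
    exact ⟨u, hu, by rw [coc_succ A hk, ContinuousLinearMap.comp_apply]⟩

lemma norm_sub_proj_le (hdich : PolyDichWith A N P D lam) (hN : NormFamily N) {m : ℕ}
    (hm : 1 ≤ m) (v : X) : N m (v - P m v) ≤ (1 + D) * N m v := by
  have hP := hdich.2.2.2.1 m m hm le_rfl v
  rw [coc_self, div_self (by positivity), Real.one_rpow, mul_one,
    one_apply_eq_self] at hP
  linarith [hN.sub_le hm v (P m v)]

lemma norm_coc_le_of_coc_eq (hdich : PolyDichWith A N P D lam) {n m k : ℕ} (hn : 1 ≤ n)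
    (hnm : n ≤ m) (hmk : m ≤ k) {u w : X} (hu : P n u = 0) (hw : coc A n k u = w) :
    N m (coc A n m u) ≤ D * ((m : ℝ) / k) ^ lam * N k w := by
  have h := hdich.2.2.2.2 m k (hn.trans hnm) hmk _ (hdich.proj_coc_eq_zero hn hnm hu)
  rwa [coc_coc_apply A hnm hmk, hw] at h

lemma eq_zero_of_bounded (hdich : PolyDichWith A N P D lam) (hN : NormFamily N) (hD : 0 ≤ D)
    (hlam : 0 < lam) {v : X} (hv : P 1 v = 0) {S : ℝ}
    (hS : ∀ n, 1 ≤ n → N n (coc A 1 n v) ≤ S) : v = 0 := by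
  have hle : ∀ n : ℕ, 1 ≤ n → N 1 v ≤ D * (n : ℝ) ^ (-lam) * S := fun n hn => by
    have h := hdich.2.2.2.2 1 n le_rfl hn v hv
    rw [Nat.cast_one, one_div, Real.inv_rpow (Nat.cast_nonneg n),
      ← Real.rpow_neg (Nat.cast_nonneg n)] at h
    exact h.trans (by gcongr; exact hS n hn)
  have hlim : Tendsto (fun n : ℕ => D * (n : ℝ) ^ (-lam) * S) atTop (𝓝 0) := by
    simpa using
      (((tendsto_rpow_neg_atTop hlam).comp tendsto_natCast_atTop_atTop).const_mul D).mul_const S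
  exact hN.eq_zero_of_le_zero le_rfl (ge_of_tendsto hlim (eventually_atTop.2 ⟨1, hle⟩))

end PolyDichWith

section GreenSolution

open Finset

variable {A P : ℕ → X →L[ℝ] X} {y u : ℕ → X}

noncomputable def stablePart (A P : ℕ → X →L[ℝ] X) (y : ℕ → X) (m : ℕ) : X :=
  ∑ k ∈ Icc 1 m, (k : ℝ)⁻¹ • coc A k m (P k (y k))

noncomputable def unstableTail (u : ℕ → X) (n : ℕ) : X :=
  ∑' j, ((j + n : ℕ) : ℝ)⁻¹ • u (j + n)

/-- `u k ∈ Ker P₁` stands for `Q_k y_k` pulled back to time `1` (`𝓐(k,1) u k = Q_k y_k`), so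
that the backward cocycle `𝓐(m,k) Q_k y_k` for `m < k` is realised as `𝓐(m,1) u k`. -/
noncomputable def greenSol (A P : ℕ → X →L[ℝ] X) (y u : ℕ → X) (m : ℕ) : X :=
  stablePart A P y m - coc A 1 m (unstableTail u (m + 1))

lemma stablePart_succ (m : ℕ) :
    stablePart A P y (m + 1)
      = A m (stablePart A P y m) + ((m + 1 : ℕ) : ℝ)⁻¹ • P (m + 1) (y (m + 1)) := by
  rw [stablePart, sum_Icc_succ_top (by omega), coc_self, stablePart, map_sum]
  congr 1
  refine sum_congr rfl fun k hk => ?_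
  rw [coc_succ A (mem_Icc.1 hk).2, map_smul, ContinuousLinearMap.comp_apply]

lemma unstableTail_eq_add (hu : Summable fun k : ℕ => (k : ℝ)⁻¹ • u k) (n : ℕ) :
    unstableTail u n = (n : ℝ)⁻¹ • u n + unstableTail u (n + 1) := by
  rw [unstableTail, ((summable_nat_add_iff n).2 hu).tsum_eq_zero_add, unstableTail]
  simp only [zero_add, add_assoc, add_comm 1 n]

lemma apply_unstableTail_eq_zero (L : X →L[ℝ] X) (hu : Summable fun k : ℕ => (k : ℝ)⁻¹ • u k)
    (hLu : ∀ k, L (u k) = 0) (n : ℕ) : L (unstableTail u n) = 0 := by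
  rw [unstableTail, L.map_tsum ((summable_nat_add_iff n).2 hu)]
  simp [hLu]

lemma greenSol_succ_sub (hu : Summable fun k : ℕ => (k : ℝ)⁻¹ • u k) {m : ℕ} (hm : 1 ≤ m)
    (hcoc : coc A 1 (m + 1) (u (m + 1)) = y (m + 1) - P (m + 1) (y (m + 1))) :
    greenSol A P y u (m + 1) - A m (greenSol A P y u m) = ((m + 1 : ℕ) : ℝ)⁻¹ • y (m + 1) := by
  have hA : A m (coc A 1 m (unstableTail u (m + 1)))
      = ((m + 1 : ℕ) : ℝ)⁻¹ • (y (m + 1) - P (m + 1) (y (m + 1)))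
        + coc A 1 (m + 1) (unstableTail u (m + 1 + 1)) := by
    rw [← ContinuousLinearMap.comp_apply, ← coc_succ A hm, unstableTail_eq_add hu, map_add,
      map_smul, hcoc]
  rw [greenSol, greenSol, stablePart_succ, map_sub, hA, smul_sub]
  abel

lemma TOp_greenSol (hy : y 1 = 0) (hu : Summable fun k : ℕ => (k : ℝ)⁻¹ • u k)
    (hcoc : ∀ k, 1 ≤ k → coc A 1 k (u k) = y k - P k (y k)) :
    ∀ m, 1 ≤ m → TOp A (greenSol A P y u) m = y m := by
  intro m hm
  obtain rfl | ⟨k, hk, rfl⟩ : m = 1 ∨ ∃ k, 1 ≤ k ∧ m = k + 1 := by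
    rcases Nat.lt_or_ge 1 m with h | h
    · exact Or.inr ⟨m - 1, by omega, by omega⟩
    · exact Or.inl (by omega)
  · rw [TOp_one, hy]
  · rw [TOp_succ _ _ hk, greenSol_succ_sub hu hk (hcoc _ hm), smul_smul,
      mul_inv_cancel₀ (by positivity), one_smul]

end GreenSolution

section Estimates

open Finset Filter

variable {A P : ℕ → X →L[ℝ] X} {N : ℕ → X → ℝ} {D lam : ℝ} {y u : ℕ → X}

lemma PolyDichWith.norm_stablePart_le (hdich : PolyDichWith A N P D lam) (hN : NormFamily N)
    (hD : 0 ≤ D) (hlam : 0 < lam) {S : ℝ} (hS : ∀ k, 1 ≤ k → N k (y k) ≤ S) {m : ℕ}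
    (hm : 1 ≤ m) : N m (stablePart A P y m) ≤ D * S * (1 + lam⁻¹) := by
  have hS0 : 0 ≤ S := (hN.nonneg le_rfl _).trans (hS 1 le_rfl)
  calc N m (stablePart A P y m)
      ≤ ∑ k ∈ Icc 1 m, N m ((k : ℝ)⁻¹ • coc A k m (P k (y k))) := hN.sum_le hm _ _
    _ ≤ ∑ k ∈ Icc 1 m, D * S * ((k : ℝ)⁻¹ * ((m : ℝ) / k) ^ (-lam)) := by
        refine sum_le_sum fun k hk => ?_
        obtain ⟨hk, hkm⟩ := mem_Icc.1 hk
        rw [hN.smul hm, abs_of_nonneg (by positivity)]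
        have hstab := hdich.2.2.2.1 m k hk hkm (y k)
        calc (k : ℝ)⁻¹ * N m (coc A k m (P k (y k)))
            ≤ (k : ℝ)⁻¹ * (D * ((m : ℝ) / k) ^ (-lam) * S) := by
              refine mul_le_mul_of_nonneg_left (hstab.trans ?_) (by positivity)
              exact mul_le_mul_of_nonneg_left (hS k hk) (by positivity)
          _ = D * S * ((k : ℝ)⁻¹ * ((m : ℝ) / k) ^ (-lam)) := by ring
    _ = D * S * ∑ k ∈ Icc 1 m, (k : ℝ)⁻¹ * ((m : ℝ) / k) ^ (-lam) := (mul_sum _ _ _).symm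
    _ ≤ D * S * (1 + lam⁻¹) :=
        mul_le_mul_of_nonneg_left (sum_Icc_inv_mul_div_rpow_neg_le hlam m) (by positivity)

lemma norm_coc_unstableTail_le (hN : NormFamily N) (hlam : 0 < lam)
    (hu : Summable fun k : ℕ => (k : ℝ)⁻¹ • u k) {K : ℝ} (hK0 : 0 ≤ K) {m : ℕ} (hm : 1 ≤ m)
    (hK : ∀ k, m ≤ k → N m (coc A 1 m (u k)) ≤ K * ((m : ℝ) / k) ^ lam) :
    N m (coc A 1 m (unstableTail u (m + 1))) ≤ K * lam⁻¹ := by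
  have hsum := (summable_nat_add_iff (m + 1)).2 hu
  rw [unstableTail, (coc A 1 m).map_tsum hsum]
  refine hN.tsum_le hm (hsum.mapL _) fun n => ?_
  calc ∑ j ∈ range n, N m (coc A 1 m (((j + (m + 1) : ℕ) : ℝ)⁻¹ • u (j + (m + 1))))
      ≤ ∑ j ∈ range n,
          K * (((j + (m + 1) : ℕ) : ℝ)⁻¹ * ((m : ℝ) / (j + (m + 1) : ℕ)) ^ lam) := by
        refine sum_le_sum fun j _ => ?_
        rw [map_smul, hN.smul hm, abs_of_nonneg (by positivity), mul_left_comm]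
        exact mul_le_mul_of_nonneg_left (hK _ (by omega)) (by positivity)
    _ = K * ∑ j ∈ range n,
          ((j + (m + 1) : ℕ) : ℝ)⁻¹ * ((m : ℝ) / (j + (m + 1) : ℕ)) ^ lam := (mul_sum _ _ _).symm
    _ ≤ K * lam⁻¹ := mul_le_mul_of_nonneg_left (sum_range_inv_mul_div_rpow_le hlam hm n) hK0

lemma summable_inv_smul_of_le [CompleteSpace X] (hN : NormFamily N) (hlam : 0 < lam) {K : ℝ}
    (hK : ∀ k, 1 ≤ k → N 1 (u k) ≤ K * ((1 : ℝ) / k) ^ lam) :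
    Summable fun k : ℕ => (k : ℝ)⁻¹ • u k := by
  obtain ⟨c, _, hc, hcC⟩ := (hN 1 le_rfl).2.2
  refine .of_norm_bounded_eventually_nat
    ((Real.summable_nat_rpow.2 (by linarith : -lam - 1 < -1)).mul_left (c⁻¹ * K)) ?_
  filter_upwards [eventually_ge_atTop 1] with k hk
  have hk0 : (0 : ℝ) < k := by exact_mod_cast hk
  rw [norm_smul, norm_inv, Real.norm_natCast]
  calc (k : ℝ)⁻¹ * ‖u k‖ ≤ (k : ℝ)⁻¹ * (c⁻¹ * (K * ((1 : ℝ) / k) ^ lam)) := by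
        refine mul_le_mul_of_nonneg_left ?_ (by positivity)
        rw [le_inv_mul_iff₀ hc]
        exact (hcC _).1.trans (hK k hk)
    _ = c⁻¹ * K * ((k : ℝ)⁻¹ * ((1 : ℝ) / k) ^ lam) := by ring
    _ = c⁻¹ * K * (k : ℝ) ^ (-lam - 1) := by
        rw [inv_mul_div_rpow hk0 zero_le_one, Real.one_rpow, one_mul]

end Estimates

namespace PolyDichWith

variable {A P : ℕ → X →L[ℝ] X} {N : ℕ → X → ℝ} {D lam : ℝ}

theorem exists_memD_TOp_eq [CompleteSpace X] (hdich : PolyDichWith A N P D lam)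
    (hN : NormFamily N) (hD : 0 ≤ D) (hlam : 0 < lam) {y : ℕ → X} (hy : MemY0 N y) :
    ∃ x, MemD A N (Set.range fun v : X => v - P 1 v) x ∧ ∀ m, 1 ≤ m → TOp A x m = y m := by
  obtain ⟨hy1, S, hS⟩ := hy
  have hS0 : 0 ≤ S := (hN.nonneg le_rfl _).trans (hS 1 le_rfl)
  have hpull : ∀ k, ∃ u, P 1 u = 0 ∧ (1 ≤ k → coc A 1 k u = y k - P k (y k)) := fun k => by
    rcases Nat.eq_zero_or_pos k with rfl | hk
    · exact ⟨0, map_zero _, by omega⟩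
    · obtain ⟨u, hu, hcoc⟩ := hdich.exists_coc_eq le_rfl hk (hdich.proj_sub_proj hk (y k))
      exact ⟨u, hu, fun _ => hcoc⟩
  choose u hu hcoc using hpull
  set K := D * ((1 + D) * S)
  have hK0 : 0 ≤ K := mul_nonneg hD (mul_nonneg (by linarith) hS0)
  have hK : ∀ m k, 1 ≤ m → m ≤ k → N m (coc A 1 m (u k)) ≤ K * ((m : ℝ) / k) ^ lam := by
    intro m k hm hmk
    calc N m (coc A 1 m (u k)) ≤ D * ((m : ℝ) / k) ^ lam * N k (y k - P k (y k)) :=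
          hdich.norm_coc_le_of_coc_eq le_rfl hm hmk (hu k) (hcoc k (hm.trans hmk))
      _ ≤ D * ((m : ℝ) / k) ^ lam * ((1 + D) * S) := by
          refine mul_le_mul_of_nonneg_left
            ((hdich.norm_sub_proj_le hN (hm.trans hmk) _).trans ?_) (by positivity)
          exact mul_le_mul_of_nonneg_left (hS k (hm.trans hmk)) (by linarith)
      _ = K * ((m : ℝ) / k) ^ lam := by ring
  have hsum : Summable fun k : ℕ => (k : ℝ)⁻¹ • u k :=
    summable_inv_smul_of_le hN hlam fun k hk => by
      simpa only [coc_self, one_apply_eq_self, Nat.cast_one] using hK 1 k le_rfl hk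
  have hx1 : P 1 (greenSol A P y u 1) = 0 := by
    simp [greenSol, stablePart, coc_self, hy1, apply_unstableTail_eq_zero (P 1) hsum hu]
  refine ⟨greenSol A P y u, ⟨⟨⟨_, sub_eq_self.2 hx1⟩, D * S * (1 + lam⁻¹) + K * lam⁻¹,
    fun m hm => ?_⟩, S, fun m hm => ?_⟩, TOp_greenSol hy1 hsum hcoc⟩
  · exact (hN.sub_le hm _ _).trans (add_le_add (hdich.norm_stablePart_le hN hD hlam hS hm)
      (norm_coc_unstableTail_le hN hlam hsum hK0 hm fun k hk => hK m k hm hk))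
  · rw [TOp_greenSol hy1 hsum hcoc m hm]
    exact hS m hm

theorem eq_of_TOp_eq (hdich : PolyDichWith A N P D lam) (hN : NormFamily N) (hD : 0 ≤ D)
    (hlam : 0 < lam) {x x' : ℕ → X} (hx : MemD A N (Set.range fun v : X => v - P 1 v) x)
    (hx' : MemD A N (Set.range fun v : X => v - P 1 v) x')
    (hT : ∀ m, 1 ≤ m → TOp A x m = TOp A x' m) : ∀ m, 1 ≤ m → x m = x' m := by
  obtain ⟨⟨⟨v, hv⟩, Sx, hSx⟩, -⟩ := hx
  obtain ⟨⟨⟨v', hv'⟩, Sx', hSx'⟩, -⟩ := hx'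
  have hdiff := sub_eq_coc_of_TOp_eq hT
  have hker : P 1 (x 1 - x' 1) = 0 := by
    have h : x 1 - x' 1 = (v - v') - P 1 (v - v') := by
      rw [← hv, ← hv', map_sub]
      dsimp only
      abel
    rw [h]
    exact hdich.proj_sub_proj le_rfl _
  have h0 : x 1 - x' 1 = 0 := hdich.eq_zero_of_bounded hN hD hlam hker fun n hn => by
    rw [← hdiff n hn]
    exact (hN.sub_le hn _ _).trans (add_le_add (hSx n hn) (hSx' n hn))
  intro m hm
  rw [← sub_eq_zero, hdiff m hm, h0, map_zero]

end PolyDichWith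

/-- if `(A_m)` admits a polynomial dichotomy with respect to the norms
`‖·‖_m`, with projections `P_m` and constants `D, λ > 0`, then for `Z = Im Q₁`
(`Q₁ = Id − P₁`) the operator `T_Z : (𝒟(T_Z), ‖·‖_{T_Z}) → Y₀` is bijective:
every `y ∈ Y₀` is `T_Z x` for some `x ∈ 𝒟(T_Z)`, and `T_Z` is injective on `𝒟(T_Z)`. -/
theorem stmt4 [CompleteSpace X] (A : ℕ → X →L[ℝ] X) (N : ℕ → X → ℝ)
    (hN : NormFamily N) (P : ℕ → X →L[ℝ] X) (D lam : ℝ)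
    (hD : 0 < D) (hlam : 0 < lam) (hdich : PolyDichWith A N P D lam) :
    (∀ y, MemY0 N y → ∃ x, MemD A N (Set.range fun v : X => v - P 1 v) x ∧
        ∀ m, 1 ≤ m → TOp A x m = y m) ∧
    (∀ x x', MemD A N (Set.range fun v : X => v - P 1 v) x →
        MemD A N (Set.range fun v : X => v - P 1 v) x' →
        (∀ m, 1 ≤ m → TOp A x m = TOp A x' m) → ∀ m, 1 ≤ m → x m = x' m) :=
  ⟨fun _ hy => hdich.exists_memD_TOp_eq hN hD.le hlam hy,
    fun _ _ hx hx' hT => hdich.eq_of_TOp_eq hN hD.le hlam hx hx' hT⟩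
end

section
/- Under a polynomial dichotomy with constants D, λ > 0, if x = (x_n) is a bounded sequence (sup_n ‖x_n‖_n < ∞) with x_1 ∈ Im Q_1 and x_{n+1} = A_n x_n for all n, then x_n = 0 for all n. -/
open scoped BigOperators

variable {X : Type*} [NormedAddCommGroup X] [NormedSpace ℝ X]

/-- under a polynomial dichotomy with constants `D, λ > 0`, if `x = (x_n)` is
bounded in the norms `‖·‖_n`, `x_1 ∈ Im Q₁` and `x_{n+1} = A_n x_n` for all `n ≥ 1`,
then `x_n = 0` for all `n ≥ 1`. -/
theorem stmt6 [CompleteSpace X] (A : ℕ → X →L[ℝ] X) (N : ℕ → X → ℝ)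
    (hN : NormFamily N) (P : ℕ → X →L[ℝ] X) (D lam : ℝ)
    (hD : 0 < D) (hlam : 0 < lam) (hdich : PolyDichWith A N P D lam)
    (x : ℕ → X) (hbdd : MemY N x)
    (hx1 : x 1 ∈ Set.range (fun v : X => v - P 1 v))
    (hrec : ∀ n, 1 ≤ n → x (n + 1) = A n (x n)) :
    ∀ n, 1 ≤ n → x n = 0 := by
  obtain ⟨hidem, -, -, -, hunst⟩ := hdich
  -- P 1 (x 1) = 0
  obtain ⟨v, hv⟩ := hx1
  have hP1 : P 1 (x 1) = 0 := by
    have h1 : P 1 (P 1 v) = P 1 v := by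
      have := hidem 1 le_rfl
      calc P 1 (P 1 v) = ((P 1).comp (P 1)) v := rfl
        _ = P 1 v := by rw [this]
    simp [← hv, h1]
  -- coc A 1 n (x 1) = x n for n ≥ 1
  have hcoc : ∀ n, 1 ≤ n → coc A 1 n (x 1) = x n := by
    intro n hn
    induction n with
    | zero => omega
    | succ m ih =>
      rcases Nat.eq_or_lt_of_le hn with h | h
      · have : m = 0 := by omega
        subst this
        simp [coc]
      · have hm : 1 ≤ m := by omega
        have : coc A 1 (m + 1) = (A m).comp (coc A 1 m) := by
          simp [coc, hm]
        rw [this, ContinuousLinearMap.comp_apply, ih hm, hrec m hm]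
  -- norm bound
  obtain ⟨S, hS⟩ := hbdd
  obtain ⟨hsub, habs, c, C, hc, hcC⟩ := hN 1 le_rfl
  have hS0 : 0 ≤ S := by
    obtain ⟨-, -, c2, C2, hc2, hcC2⟩ := hN 1 le_rfl
    have h1 := (hcC2 (x 1)).1
    have h2 := hS 1 le_rfl
    nlinarith [norm_nonneg (x 1)]
  have hbound : ∀ n : ℕ, 1 ≤ n → c * ‖x 1‖ ≤ D * (((1 : ℝ) / n) ^ lam) * S := by
    intro n hn
    have h1 := hunst 1 n le_rfl hn (x 1) hP1
    rw [hcoc n hn] at h1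
    have h2 := hS n hn
    have h3 := (hcC (x 1)).1
    have hpos : 0 < D * (((1 : ℝ) / n) ^ lam) := by
      apply mul_pos hD
      apply Real.rpow_pos_of_pos
      positivity
    calc c * ‖x 1‖ ≤ N 1 (x 1) := h3
      _ ≤ D * (((1 : ℝ) / n) ^ lam) * N n (x n) := by
          simpa using h1
      _ ≤ D * (((1 : ℝ) / n) ^ lam) * S := by
          exact mul_le_mul_of_nonneg_left h2 hpos.le
  -- take limit n → ∞
  have htend : Filter.Tendsto (fun n : ℕ => D * (((1 : ℝ) / n) ^ lam) * S)
      Filter.atTop (nhds 0) := by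
    have h0 : Filter.Tendsto (fun n : ℕ => ((1 : ℝ) / n)) Filter.atTop (nhds 0) :=
      tendsto_one_div_atTop_nhds_zero_nat
    have h1 : Filter.Tendsto (fun n : ℕ => ((1 : ℝ) / n) ^ lam) Filter.atTop
        (nhds ((0 : ℝ) ^ lam)) := h0.rpow_const (Or.inr hlam.le)
    rw [Real.zero_rpow hlam.ne'] at h1
    have := (h1.const_mul D).mul_const S
    simpa using this
  have hle : c * ‖x 1‖ ≤ 0 := by
    refine ge_of_tendsto htend ?_
    filter_upwards [Filter.eventually_ge_atTop 1] with n hn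
    exact hbound n hn
  have hx10 : x 1 = 0 := by
    have : ‖x 1‖ ≤ 0 := by
      by_contra h
      push_neg at h
      nlinarith
    simpa using le_antisymm this (norm_nonneg _)
  intro n hn
  rw [← hcoc n hn, hx10, map_zero]
end

section
/- Suppose there is a closed subspace Z ⊆ X such that T_Z : D(T_Z) → Y_0 is invertible, and there exist M, a > 0 with ‖A(m,n)x‖_m ≤ M(m/n)^a ‖x‖_n for all m ≥ n and x ∈ X. For n ∈ ℕ set X(n) = {x ∈ X : sup_{m≥n} ‖A(m,n)x‖_m < ∞} and Z(n) = A(n,1)Z. Then X = X(n) ⊕ Z(n) for every n ∈ ℕ. -/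
open scoped BigOperators

variable {X : Type*} [NormedAddCommGroup X] [NormedSpace ℝ X]

/-- The stable space `X(n) = {x : sup_{m ≥ n} ‖𝓐(m,n)x‖_m < ∞}`. -/
def Xs (A : ℕ → X →L[ℝ] X) (N : ℕ → X → ℝ) (n : ℕ) : Set X :=
  {x : X | ∃ S : ℝ, ∀ m, n ≤ m → N m (coc A n m x) ≤ S}

/-- The unstable space `Z(n) = 𝓐(n,1) Z`. -/
def Zs (A : ℕ → X →L[ℝ] X) (Z : Set X) (n : ℕ) : Set X := coc A 1 n '' Z

/-- `T_Z : 𝒟(T_Z) → Y₀` is invertible, with `κ` a bound for the norm of its inverse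
(with respect to the graph norm on the domain). -/
def TInv (A : ℕ → X →L[ℝ] X) (N : ℕ → X → ℝ) (Z : Set X) (κ : ℝ) : Prop :=
  (∀ y, MemY0 N y → ∃ x, MemD A N Z x ∧ ∀ m, 1 ≤ m → TOp A x m = y m) ∧
  (∀ x x', MemD A N Z x → MemD A N Z x' →
      (∀ m, 1 ≤ m → TOp A x m = TOp A x' m) → ∀ m, 1 ≤ m → x m = x' m) ∧
  (∀ y x, MemY0 N y → MemD A N Z x → (∀ m, 1 ≤ m → TOp A x m = y m) →
      ∀ S : ℝ, (∀ m, 1 ≤ m → N m (y m) ≤ S) → ∀ m, 1 ≤ m → N m (x m) ≤ κ * S)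

/-- The uniform polynomial growth bound `‖𝓐(m,n)x‖_m ≤ M (m/n)^a ‖x‖_n` for `m ≥ n`. -/
def Grow (A : ℕ → X →L[ℝ] X) (N : ℕ → X → ℝ) (M a : ℝ) : Prop :=
  ∀ m n, 1 ≤ n → n ≤ m → ∀ x : X,
    N m (coc A n m x) ≤ M * (((m : ℝ) / (n : ℝ)) ^ a) * N n x

lemma coc_comp (A : ℕ → X →L[ℝ] X) {k n m : ℕ} (hk : k ≤ n) (h : n ≤ m) (x : X) :
    coc A n m (coc A k n x) = coc A k m x := by
  induction m, h using Nat.le_induction with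
  | base => simp [coc_self]
  | succ m hm ih => rw [coc_succ A hm, coc_succ A (hk.trans hm)]; simp [ih]

/-- if `T_Z` is invertible for some closed subspace `Z` and the polynomial
growth bound `‖𝓐(m,n)x‖_m ≤ M(m/n)^a‖x‖_n` (`m ≥ n`) holds, then `X = X(n) ⊕ Z(n)`
for every `n ≥ 1`. -/
theorem stmt7 [CompleteSpace X] (A : ℕ → X →L[ℝ] X) (N : ℕ → X → ℝ)
    (hN : NormFamily N) (Z : Submodule ℝ X) (hZ : IsClosed (Z : Set X))
    (κ : ℝ) (hinv : TInv A N (Z : Set X) κ)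
    (M a : ℝ) (hM : 0 < M) (ha : 0 < a) (hgrow : Grow A N M a) :
    ∀ n, 1 ≤ n →
      (∀ v : X, ∃ u ∈ Xs A N n, ∃ w ∈ Zs A (Z : Set X) n, v = u + w) ∧
      (∀ v : X, v ∈ Xs A N n → v ∈ Zs A (Z : Set X) n → v = 0) := by
  have hN0 : ∀ m, 1 ≤ m → N m (0 : X) = 0 := by
    intro m hm
    simpa using (hN m hm).2.1 0 0
  have hNneg : ∀ m, 1 ≤ m → ∀ w : X, N m (-w) = N m w := by
    intro m hm w
    simpa using (hN m hm).2.1 (-1) w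
  intro n hn
  constructor
  · -- existence of the decomposition
    intro v
    set y : ℕ → X := fun m =>
      if m = n + 1 then ((n + 1 : ℕ) : ℝ) • (-(A n v)) else 0 with hy
    have hy0 : MemY0 N y := by
      refine ⟨if_neg (by omega), max 0 (N (n + 1) (y (n + 1))), ?_⟩
      intro m hm
      by_cases h : m = n + 1
      · subst h; exact le_max_right _ _
      · rw [show y m = 0 from if_neg h, hN0 m hm]; exact le_max_left _ _
    obtain ⟨x, hxD, hxT⟩ := hinv.1 y hy0
    have hrel : ∀ m, 1 ≤ m → m ≠ n → x (m + 1) = A m (x m) := by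
      intro m hm hmn
      have h1 := hxT (m + 1) (by omega)
      have h2 : y (m + 1) = 0 := if_neg (by omega)
      rw [h2] at h1
      simp only [TOp, if_neg (by omega : ¬ m + 1 ≤ 1), Nat.add_sub_cancel] at h1
      rcases smul_eq_zero.mp h1 with h | h
      · exact absurd h (by positivity)
      · exact sub_eq_zero.mp h
    have hreln : x (n + 1) - A n (x n) = -(A n v) := by
      have h1 := hxT (n + 1) (by omega)
      have h2 : y (n + 1) = ((n + 1 : ℕ) : ℝ) • (-(A n v)) := if_pos rfl
      rw [h2] at h1
      simp only [TOp, if_neg (by omega : ¬ n + 1 ≤ 1), Nat.add_sub_cancel] at h1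
      exact smul_right_injective X (by positivity) h1
    have hlow : ∀ m, 1 ≤ m → m ≤ n → x m = coc A 1 m (x 1) := by
      intro m
      induction m with
      | zero => omega
      | succ k ih =>
        intro _ hk
        by_cases hk0 : k = 0
        · subst hk0; simp [coc_self]
        · have h1k : 1 ≤ k := by omega
          rw [hrel k h1k (by omega), ih h1k (by omega), coc_succ A h1k]
          rfl
    have hhigh : ∀ m, n + 1 ≤ m → coc A n m (v - x n) = -(x m) := by
      intro m hm
      induction m, hm using Nat.le_induction with
      | base =>
        rw [coc_succ A (le_refl n)]
        simp only [ContinuousLinearMap.comp_apply, coc_self,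
          ContinuousLinearMap.one_apply, map_sub]
        rw [show x (n + 1) = A n (x n) - A n v by
          have := sub_eq_iff_eq_add.mp hreln; rw [this]; abel]
        abel
      | succ m hm ih =>
        rw [coc_succ A (by omega : n ≤ m), ContinuousLinearMap.comp_apply, ih,
          hrel m (by omega) (by omega), map_neg]
    obtain ⟨Sx, hSx⟩ := hxD.1.2
    refine ⟨v - x n, ⟨max (N n (v - x n)) Sx, ?_⟩, x n,
      ⟨x 1, hxD.1.1, (hlow n hn le_rfl).symm⟩, by abel⟩
    intro m hmn
    rcases eq_or_lt_of_le hmn with h | h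
    · rw [← h, coc_self]
      exact le_max_left _ _
    · rw [hhigh m h, hNneg m (by omega)]
      exact (hSx m (by omega)).trans (le_max_right _ _)
  · -- uniqueness
    intro v hvX hvZ
    obtain ⟨S, hS⟩ := hvX
    obtain ⟨z, hz, hzv⟩ := hvZ
    set x : ℕ → X := fun m => coc A 1 m z with hx
    have hx1 : x 1 = z := by simp [hx, coc_self]
    have hxm : ∀ m, n ≤ m → x m = coc A n m v := by
      intro m hm
      rw [← hzv, coc_comp A hn hm]
    have hT0 : ∀ m, TOp A x m = 0 := by
      intro m
      match m with
      | 0 => simp [TOp]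
      | 1 => simp [TOp]
      | (k + 2) =>
        simp only [TOp, if_neg (by omega : ¬ k + 2 ≤ 1), Nat.add_sub_cancel]
        rw [show x (k + 2) = A (k + 1) (x (k + 1)) by
          rw [hx]; simp only []; rw [coc_succ A (by omega : 1 ≤ k + 1)]; rfl]
        simp
    have hxY : MemY N x := by
      refine ⟨max S ((Finset.range (n + 1)).sup' ⟨0, by simp⟩ fun m => N m (x m)), ?_⟩
      intro m hm
      by_cases h : n ≤ m
      · rw [hxm m h]
        exact (hS m h).trans (le_max_left _ _)
      · have hmem : m ∈ Finset.range (n + 1) := by simp; omega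
        exact (Finset.le_sup' (fun m => N m (x m)) hmem).trans (le_max_right _ _)
    have hxD : MemD A N (Z : Set X) x := by
      refine ⟨⟨by rw [hx1]; exact hz, hxY⟩, 0, ?_⟩
      intro m hm
      rw [hT0 m, hN0 m hm]
    have h0D : MemD A N (Z : Set X) (fun _ => 0) := by
      refine ⟨⟨Z.zero_mem, 0, fun m hm => le_of_eq (hN0 m hm)⟩, 0, ?_⟩
      intro m hm
      have : TOp A (fun _ => (0 : X)) m = 0 := by
        simp [TOp]
      rw [this, hN0 m hm]
    have := hinv.2.1 x (fun _ => 0) hxD h0D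
      (fun m _ => by
        rw [hT0 m]
        by_cases h : m ≤ 1 <;> simp [TOp, h]) n hn
    rw [← hzv]
    simpa [hx] using this
end
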